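/- The Lagrangian angle of the Schoen–Wolfson cone parametrization Φ_{p,q} equals e^{i(p-q)θ}: explicitly, dz₁∧dz₂ evaluated on (∂_r Φ_{p,q}, (1/r) ∂_θ Φ_{p,q}) equals e^{i(p-q)θ} times |∂_r Φ_{p,q}|² for all r > 0 and θ. -/

import Mathlib

/-!
`Φ_{p,q}(r, θ) = r^K γ(θ)` with `K = √(pq)` is the cone over the curve
`γ(θ) = (√q e^{ipθ}, i√p e^{-iqθ}) / √(p+q)` on the unit sphere. So `∂_r Φ = K r^{K-1} γ` and
`r⁻¹ ∂_θ Φ = r^{K-1} γ'`, and both sides equal `K² r^{2K-2} e^{i(p-q)θ}`: on the left because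
`dz₁∧dz₂(γ, γ') = √q √p (p + q) / (p + q) · e^{i(p-q)θ}`, on the right because `|γ| = 1`.
-/

/-- The Schoen–Wolfson cone parametrization `Φ_{p,q}` in polar coordinates. -/
noncomputable def SWPhi (p q : ℕ) (r θ : ℝ) : ℂ × ℂ :=
  ( ((r ^ Real.sqrt ((p : ℝ) * q) / Real.sqrt ((p : ℝ) + q) * Real.sqrt q : ℝ) : ℂ) *
      Complex.exp (Complex.I * p * θ),
    ((r ^ Real.sqrt ((p : ℝ) * q) / Real.sqrt ((p : ℝ) + q) * Real.sqrt p : ℝ) : ℂ) *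
      Complex.I * Complex.exp (-(Complex.I * q * θ)) )

/-- The real (Euclidean) inner product on `ℂ² ≅ ℝ⁴`. -/
noncomputable def rinner (u v : ℂ × ℂ) : ℝ :=
  (u.1 * (starRingEnd ℂ) v.1).re + (u.2 * (starRingEnd ℂ) v.2).re

/-- The holomorphic area form `dz₁ ∧ dz₂` evaluated on tangent vectors `u, v ∈ ℂ²`. -/
noncomputable def dzWedge (u v : ℂ × ℂ) : ℂ := u.1 * v.2 - u.2 * v.1

open Complex

lemma dzWedge_smul_smul (a b : ℝ) (u v : ℂ × ℂ) :
    dzWedge (a • u) (b • v) = (a * b : ℝ) * dzWedge u v := by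
  simp only [dzWedge, Prod.smul_fst, Prod.smul_snd, real_smul]
  push_cast
  ring

lemma rinner_smul_smul (a b : ℝ) (u v : ℂ × ℂ) :
    rinner (a • u) (b • v) = a * b * rinner u v := by
  have hre (z w : ℂ) : ((a : ℂ) * z * (b * w)).re = a * b * (z * w).re := by
    rw [mul_mul_mul_comm, ← ofReal_mul, re_ofReal_mul]
  simp only [rinner, Prod.smul_fst, Prod.smul_snd, real_smul, map_mul, conj_ofReal, hre]
  ring

lemma rinner_self (u : ℂ × ℂ) : rinner u u = normSq u.1 + normSq u.2 := by
  simp only [rinner, mul_conj, ofReal_re]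

lemma hasDerivAt_cexp_mul_ofReal (c : ℂ) (t : ℝ) :
    HasDerivAt (fun t : ℝ => exp (c * t)) (exp (c * t) * c) t := by
  simpa using ((hasDerivAt_id t).ofReal_comp.const_mul c).cexp

noncomputable def swLink (p q : ℕ) (θ : ℝ) : ℂ × ℂ :=
  ( (√q / √(p + q) : ℝ) * exp (I * p * θ), (√p / √(p + q) : ℝ) * I * exp (-I * q * θ) )

noncomputable def swLinkDeriv (p q : ℕ) (θ : ℝ) : ℂ × ℂ :=
  ( (√q / √(p + q) : ℝ) * (exp (I * p * θ) * (I * p)),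
    (√p / √(p + q) : ℝ) * I * (exp (-I * q * θ) * (-I * q)) )

lemma SWPhi_eq_rpow_smul_swLink (p q : ℕ) (r θ : ℝ) :
    SWPhi p q r θ = r ^ √(p * q) • swLink p q θ := by
  ext <;> simp only [SWPhi, swLink, Prod.smul_mk, real_smul] <;> push_cast <;> ring_nf

lemma hasDerivAt_swLink (p q : ℕ) (θ : ℝ) :
    HasDerivAt (swLink p q) (swLinkDeriv p q θ) θ :=
  ((hasDerivAt_cexp_mul_ofReal _ θ).const_mul _).prodMk
    ((hasDerivAt_cexp_mul_ofReal _ θ).const_mul _)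

lemma dzWedge_swLink (p q : ℕ) (h : p + q ≠ 0) (θ : ℝ) :
    dzWedge (swLink p q θ) (swLinkDeriv p q θ) = √(p * q) * exp (I * (p - q) * θ) := by
  have hexp : exp (I * p * θ) * exp (-I * q * θ) = exp (I * (p - q) * θ) := by
    rw [← exp_add]; ring_nf
  have hcoef : √q / √(p + q) * (√p / √(p + q)) * (p + q) = √(p * q) := by
    have : (p + q : ℝ) ≠ 0 := by exact_mod_cast h
    rw [div_mul_div_comm, ← Real.sqrt_mul (Nat.cast_nonneg _), mul_comm (q : ℝ),
      Real.mul_self_sqrt (by positivity)]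
    field_simp
  have hcoefC := congrArg ofReal hcoef
  push_cast at hcoefC
  simp only [dzWedge, swLink, swLinkDeriv]
  push_cast
  rw [← hexp, ← hcoefC]
  linear_combination (-(√q / √(p + q) * (√p / √(p + q)) * (p + q) : ℂ) * exp (I * p * θ) *
    exp (-I * q * θ)) * I_sq

lemma rinner_swLink_self (p q : ℕ) (h : p + q ≠ 0) (θ : ℝ) :
    rinner (swLink p q θ) (swLink p q θ) = 1 := by
  have hsum : (p + q : ℝ) ≠ 0 := by exact_mod_cast h
  have hsq : √(p + q : ℝ) ^ 2 = p + q := Real.sq_sqrt (by positivity)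
  calc rinner (swLink p q θ) (swLink p q θ) = q / (p + q) + p / (p + q) := by
        simp [rinner_self, swLink, normSq_eq_norm_sq, norm_exp, div_pow, hsq]
    _ = 1 := by rw [← add_div, add_comm, div_self hsum]

theorem swcone_lagrangian_angle_general (p q : ℕ) (hp : 0 < p) (r θ : ℝ) (hr : 0 < r) :
    dzWedge (deriv (fun s => SWPhi p q s θ) r) (r⁻¹ • deriv (fun t => SWPhi p q r t) θ) =
      Complex.exp (Complex.I * ((p : ℂ) - q) * θ) *
        (rinner (deriv (fun s => SWPhi p q s θ) r) (deriv (fun s => SWPhi p q s θ) r) : ℝ) := by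
  have hpq : p + q ≠ 0 := by omega
  set K := √(p * q)
  simp only [SWPhi_eq_rpow_smul_swLink]
  have hradial : HasDerivAt (fun s => s ^ K • swLink p q θ) ((K * r ^ (K - 1)) • swLink p q θ) r :=
    (Real.hasDerivAt_rpow_const (Or.inl hr.ne')).smul_const _
  have hangular : HasDerivAt (fun t => r ^ K • swLink p q t) (r ^ K • swLinkDeriv p q θ) θ :=
    (hasDerivAt_swLink p q θ).const_smul (r ^ K)
  have hscale : r⁻¹ * r ^ K = r ^ (K - 1) := by rw [Real.rpow_sub_one hr.ne', inv_mul_eq_div]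
  rw [hradial.deriv, hangular.deriv, smul_smul, hscale, dzWedge_smul_smul, rinner_smul_smul,
    dzWedge_swLink p q hpq, rinner_swLink_self p q hpq]
  push_cast
  ring

/-- The Lagrangian angle of `Φ_{p,q}`:
`dz₁∧dz₂(∂_r Φ, (1/r)∂_θ Φ) = e^{i(p-q)θ} |∂_r Φ|²` for all `r > 0` and `θ`. -/
theorem swcone_lagrangian_angle (p q : ℕ) (hp : 0 < p) (hq : 0 < q) (r θ : ℝ) (hr : 0 < r) :
    dzWedge (deriv (fun s => SWPhi p q s θ) r) (r⁻¹ • deriv (fun t => SWPhi p q r t) θ) =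
      Complex.exp (Complex.I * ((p : ℂ) - q) * θ) *
        (rinner (deriv (fun s => SWPhi p q s θ) r) (deriv (fun s => SWPhi p q s θ) r) : ℝ) :=
  swcone_lagrangian_angle_general p q hp r θ hr
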